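/- Let (X,G) be an irregular extension of (Y,G) via a factor map h : X → Y, i.e., there is a G-invariant measure μ on X with h(μ)({y : #h⁻¹(y) > 1}) > 0. If h(μ)-almost all fibers h⁻¹(y) are finite, then h is not a topo-isomorphy: there exists a G-invariant measure on X for which h fails to be an isomorphism mod 0 onto its push-forward. -/

import Mathlib

open MeasureTheory Filter Topology Pointwise

/-- A (left) Følner sequence: a sequence of non-empty compact subsets `F n` of `G` such that
`m (g • F n △ F n) / m (F n) → 0` for every `g ∈ G`. -/
def IsFolner {G : Type*} [Group G] [TopologicalSpace G] [MeasurableSpace G]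
    (m : Measure G) (F : ℕ → Set G) : Prop :=
  (∀ n, IsCompact (F n)) ∧ (∀ n, (F n).Nonempty) ∧
    ∀ g : G, Tendsto (fun n => m (symmDiff (g • F n) (F n)) / m (F n)) atTop (𝓝 0)

/-- Amenability of `G` (with Haar measure `m`), expressed by the existence of a left Følner
sequence. -/
def AmenableGroup {G : Type*} [Group G] [TopologicalSpace G] [MeasurableSpace G]
    (m : Measure G) : Prop :=
  ∃ F : ℕ → Set G, IsFolner m F

/-- The Besicovitch pseudometric `D_𝓕` associated to a Følner sequence `F`. -/
noncomputable def besicovitchD {G : Type*} [Group G] [MeasurableSpace G] {X : Type*}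
    [SMul G X] [PseudoMetricSpace X] (m : Measure G) (F : ℕ → Set G) (x y : X) : ℝ :=
  limsup (fun n => (∫ t in F n, dist (t • x) (t • y) ∂m) / (m (F n)).toReal) atTop

/-- The Weyl pseudometric `D`, the supremum of `D_𝓕` over all left Følner sequences `𝓕`. -/
noncomputable def weylD {G : Type*} [Group G] [TopologicalSpace G] [MeasurableSpace G]
    {X : Type*} [SMul G X] [PseudoMetricSpace X] (m : Measure G) (x y : X) : ℝ :=
  sSup {r | ∃ F : ℕ → Set G, IsFolner m F ∧ r = besicovitchD m F x y}

/-- (Weyl-)mean equicontinuity of the action of `G` on `X`. -/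
def MeanEquicontinuous {G : Type*} [Group G] [TopologicalSpace G] [MeasurableSpace G]
    (X : Type*) [SMul G X] [PseudoMetricSpace X] (m : Measure G) : Prop :=
  ∀ ε > 0, ∃ δ > 0, ∀ x y : X, dist x y < δ → weylD m x y < ε

/-- Besicovitch-`𝓕`-mean equicontinuity with respect to the Følner sequence `F`. -/
def FMeanEquicontinuous {G : Type*} [Group G] [MeasurableSpace G]
    (X : Type*) [SMul G X] [PseudoMetricSpace X] (m : Measure G) (F : ℕ → Set G) : Prop :=
  ∀ ε > 0, ∃ δ > 0, ∀ x y : X, dist x y < δ → besicovitchD m F x y < ε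

/-- The pseudometric `D_f` associated to a function `f : X → ℂ`. -/
noncomputable def besicovitchDf {G : Type*} [Group G] [MeasurableSpace G] {X : Type*}
    [SMul G X] (m : Measure G) (F : ℕ → Set G) (f : X → ℂ) (x y : X) : ℝ :=
  limsup (fun n => (∫ t in F n, ‖f (t • x) - f (t • y)‖ ∂m) / (m (F n)).toReal)
    atTop

/-- The Weyl version of `D_f`: supremum over all Følner sequences. -/
noncomputable def weylDf {G : Type*} [Group G] [TopologicalSpace G] [MeasurableSpace G]
    {X : Type*} [SMul G X] (m : Measure G) (f : X → ℂ) (x y : X) : ℝ :=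
  sSup {r | ∃ F : ℕ → Set G, IsFolner m F ∧ r = besicovitchDf m F f x y}

/-- A measure `μ` on `X` is invariant under the action of `G`. -/
def IsInvariantMeasure (G : Type*) [Group G] {X : Type*} [MulAction G X]
    [MeasurableSpace X] (μ : Measure X) : Prop :=
  ∀ g : G, MeasurePreserving (fun x : X => g • x) μ μ

/-- A measure `μ` on `X` is invariant and ergodic under the action of `G`. -/
def IsErgodicMeasure (G : Type*) [Group G] {X : Type*} [MulAction G X]
    [MeasurableSpace X] (μ : Measure X) : Prop :=
  IsInvariantMeasure G μ ∧
    ∀ A : Set X, MeasurableSet A →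
      (∀ g : G, μ (symmDiff A ((fun x : X => g • x) ⁻¹' A)) = 0) → μ A = 0 ∨ μ A = 1

/-- A (topological) factor map: a continuous equivariant surjection. -/
def IsFactorMap (G : Type*) [Group G] {X Y : Type*} [TopologicalSpace X]
    [TopologicalSpace Y] [MulAction G X] [MulAction G Y] (h : X → Y) : Prop :=
  Continuous h ∧ Function.Surjective h ∧ ∀ (g : G) (x : X), h (g • x) = g • h x

/-- `h` is an isomorphism mod 0 with respect to `μ` and `ν`: `h` pushes `μ` to `ν` and
restricts to a bi-measurable bijection between full measure sets. -/
def IsIsoMod0 {X Y : Type*} [MeasurableSpace X] [MeasurableSpace Y]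
    (h : X → Y) (μ : Measure X) (ν : Measure Y) : Prop :=
  Measurable h ∧ Measure.map h μ = ν ∧
    ∃ (M : Set X) (N : Set Y) (g : Y → X), MeasurableSet M ∧ MeasurableSet N ∧
      μ M = 1 ∧ ν N = 1 ∧ Measurable g ∧ Set.BijOn h M N ∧
      (∀ x ∈ M, g (h x) = x) ∧ (∀ y ∈ N, h (g y) = y)

/-- A topo-isomorphy: a factor map which is an isomorphism mod 0 with respect to every
`G`-invariant probability measure and its push-forward. -/
def IsTopoIsomorphy (G : Type*) [Group G] {X Y : Type*} [TopologicalSpace X]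
    [TopologicalSpace Y] [MeasurableSpace X] [MeasurableSpace Y] [MulAction G X]
    [MulAction G Y] (h : X → Y) : Prop :=
  IsFactorMap G h ∧
    ∀ μ : Measure X, IsProbabilityMeasure μ → IsInvariantMeasure G μ →
      IsIsoMod0 h μ (Measure.map h μ)

/-- The action of `G` on `X` is equicontinuous. -/
def EquicontinuousAction (G : Type*) [Group G] (X : Type*) [SMul G X]
    [PseudoMetricSpace X] : Prop :=
  ∀ ε > 0, ∃ δ > 0, ∀ x y : X, dist x y < δ → ∀ g : G, dist (g • x) (g • y) < ε

/-- `A` is a minimal set: non-empty, closed, invariant, and every orbit is dense in `A`. -/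
def IsMinimalSet (G : Type*) [Group G] {X : Type*} [TopologicalSpace X] [MulAction G X]
    (A : Set X) : Prop :=
  A.Nonempty ∧ IsClosed A ∧ (∀ g : G, g • A = A) ∧
    ∀ x ∈ A, closure (MulAction.orbit G x) = A

/-- `A` is a transitive set: non-empty, closed, invariant, containing a point with dense
orbit in `A`. -/
def IsTransitiveSet (G : Type*) [Group G] {X : Type*} [TopologicalSpace X] [MulAction G X]
    (A : Set X) : Prop :=
  A.Nonempty ∧ IsClosed A ∧ (∀ g : G, g • A = A) ∧
    ∃ x ∈ A, closure (MulAction.orbit G x) = A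

/-- `A` carries exactly one `G`-invariant Borel probability measure. -/
def UniquelyErgodicOn (G : Type*) [Group G] {X : Type*} [MulAction G X]
    [MeasurableSpace X] (A : Set X) : Prop :=
  ∃! μ : Measure X, IsProbabilityMeasure μ ∧ IsInvariantMeasure G μ ∧ μ A = 1

/-- The (topological) support of a measure. -/
def measSupport {X : Type*} [TopologicalSpace X] [MeasurableSpace X]
    (μ : Measure X) : Set X :=
  {x | ∀ U : Set X, IsOpen U → x ∈ U → 0 < μ U}

/-!
Push `μ` down to `ν = h_* μ` and lift it back by spreading the mass at each `y` uniformly over the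
(almost surely finite) fibre `h ⁻¹' {y}`. This lift is again an invariant probability measure. An
isomorphism mod 0 for it would give a full-measure set `M` on which `h` is injective; but `M` meets
a fibre with `n ≥ 2` points in mass at most `1 / n ≤ 1 / 2`, and such fibres carry positive
`ν`-measure. The lift is measurable because, `X` being compact, the set of `y` whose fibre meets a
closed `K` in at least `k` points is `F_σ`: it is the union over `ε > 0` of the closed sets of `y`
admitting `k` points of `h ⁻¹' {y} ∩ K` that are pairwise `ε`-apart.
-/

open ProbabilityTheory Set

theorem Set.natCast_le_encard_iff_exists_injective {α : Type*} {s : Set α} {k : ℕ} :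
    (k : ℕ∞) ≤ s.encard ↔ ∃ x : Fin k → α, Function.Injective x ∧ ∀ i, x i ∈ s := by
  constructor
  · intro hk
    obtain ⟨t, hts, htk⟩ := exists_subset_encard_eq hk
    have htfin : t.Finite := finite_of_encard_eq_coe htk
    have : Finite t := htfin
    have hcard : Nat.card t = k := by
      rw [Nat.card_coe_set_eq, ← ENat.natCast_inj, htfin.cast_ncard_eq, htk]
    let e := (Finite.equivFinOfCardEq hcard).symm
    exact ⟨fun i => e i, Subtype.val_injective.comp e.injective, fun i => hts (e i).2⟩
  · rintro ⟨x, hx, hxs⟩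
    calc (k : ℕ∞) = (range x).encard := by
          rw [← image_univ, hx.encard_image, encard_univ, ENat.card_eq_coe_fintype_card,
            Fintype.card_fin]
      _ ≤ s.encard := encard_le_encard (range_subset_iff.2 hxs)

theorem ENat.measurable_of_measurableSet_natCast_le {α : Type*} [MeasurableSpace α]
    {f : α → ℕ∞} (hf : ∀ n : ℕ, MeasurableSet {a | (n : ℕ∞) ≤ f a}) : Measurable f := by
  refine measurable_to_countable' fun n => ?_
  induction n using ENat.recTopCoe with
  | top =>
    have : f ⁻¹' {⊤} = ⋂ n : ℕ, {a | (n : ℕ∞) ≤ f a} := by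
      ext a
      simp [ENat.eq_top_iff_forall_ge]
    exact this ▸ .iInter hf
  | coe n =>
    have : f ⁻¹' {(n : ℕ∞)} = {a | (n : ℕ∞) ≤ f a} \ {a | ((n + 1 : ℕ) : ℕ∞) ≤ f a} := by
      ext a
      rw [mem_preimage, mem_singleton_iff, Set.mem_sdiff, mem_ofPred_eq, mem_ofPred_eq, not_le,
        Nat.cast_succ, ENat.lt_add_one_iff (ENat.natCast_ne_top n), le_antisymm_iff, and_comm]
    exact this ▸ (hf n).diff (hf (n + 1))

theorem ProbabilityTheory.uniformOn_preimage {α β : Type*} [MeasurableSpace α]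
    [MeasurableSingletonClass α] [MeasurableSpace β] [MeasurableSingletonClass β] {e : α → β}
    (he : MeasurableEmbedding e) {s : Set α} (hs : MeasurableSet s) (t : Set β) :
    uniformOn s (e ⁻¹' t) = uniformOn (e '' s) t := by
  rw [uniformOn, uniformOn, cond_apply hs, cond_apply (he.measurableSet_image.2 hs),
    ← Measure.count_injective_image he.injective, ← Measure.count_injective_image he.injective,
    image_inter_preimage]

theorem ProbabilityTheory.uniformOn_lt_one {Ω : Type*} [MeasurableSpace Ω]
    [MeasurableSingletonClass Ω] {s t : Set Ω} (hs : s.Finite) (hs' : s.Nontrivial)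
    (hst : (s ∩ t).Subsingleton) : uniformOn s t < 1 := by
  have hcount : 1 < Measure.count s := by
    rw [Measure.count_apply hs.measurableSet]
    exact_mod_cast one_lt_encard_iff_nontrivial.2 hs'
  calc uniformOn s t = (Measure.count s)⁻¹ * Measure.count (s ∩ t) :=
        cond_apply hs.measurableSet _ _
    _ ≤ (Measure.count s)⁻¹ * 1 := by
        gcongr
        rw [Measure.count_apply (hs.inter_of_left t).measurableSet]
        exact_mod_cast encard_le_one_iff_subsingleton.2 hst
    _ < 1 := by
        rw [mul_one]
        exact ENNReal.inv_lt_one.2 hcount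

section Fibers

variable {X Y : Type*} [MetricSpace X] [CompactSpace X] [TopologicalSpace Y] [T2Space Y]
  {h : X → Y}

theorem isClosed_setOf_exists_separated_tuple_in_fiber (hh : Continuous h) {K : Set X}
    (hK : IsClosed K) (k : ℕ) (ε : ℝ) :
    IsClosed {y | ∃ x : Fin k → X, (∀ i, x i ∈ K ∧ h (x i) = y) ∧
      Pairwise fun i j => ε ≤ dist (x i) (x j)} := by
  have hT : IsClosed {p : (Fin k → X) × Y | (∀ i, p.1 i ∈ K ∧ h (p.1 i) = p.2) ∧
      Pairwise fun i j => ε ≤ dist (p.1 i) (p.1 j)} := by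
    simp only [ofPred_and, ofPred_forall, Pairwise]
    exact (isClosed_iInter fun i => (hK.preimage (by fun_prop)).inter
      (isClosed_eq (by fun_prop) (by fun_prop))).inter
      (isClosed_iInter fun i => isClosed_iInter fun j => isClosed_iInter fun _ =>
        isClosed_le (by fun_prop) (by fun_prop))
  simpa [image] using isClosedMap_snd_of_compactSpace _ hT

variable [MeasurableSpace Y] [OpensMeasurableSpace Y]

theorem measurableSet_setOf_natCast_le_encard_fiber (hh : Continuous h) {K : Set X}
    (hK : IsClosed K) (k : ℕ) : MeasurableSet {y | (k : ℕ∞) ≤ (h ⁻¹' {y} ∩ K).encard} := by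
  have : {y | (k : ℕ∞) ≤ (h ⁻¹' {y} ∩ K).encard} = ⋃ m : ℕ,
      {y | ∃ x : Fin k → X, (∀ i, x i ∈ K ∧ h (x i) = y) ∧
        Pairwise fun i j => 1 / ((m : ℝ) + 1) ≤ dist (x i) (x j)} := by
    ext y
    simp only [mem_ofPred_eq, mem_iUnion, natCast_le_encard_iff_exists_injective, mem_inter_iff,
      mem_preimage, mem_singleton_iff]
    constructor
    · rintro ⟨x, hx, hxK⟩
      have : ∀ᶠ m : ℕ in atTop, Pairwise fun i j => 1 / ((m : ℝ) + 1) ≤ dist (x i) (x j) := by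
        simp only [Pairwise, eventually_all]
        intro i j hij
        exact (tendsto_one_div_add_atTop_nhds_zero_nat.eventually
          (gt_mem_nhds (dist_pos.2 (hx.ne hij)))).mono fun _ => le_of_lt
      obtain ⟨m, hm⟩ := this.exists
      exact ⟨m, x, fun i => ⟨(hxK i).2, (hxK i).1⟩, hm⟩
    · rintro ⟨m, x, hx, hsep⟩
      refine ⟨x, fun i j hij => ?_, fun i => ⟨(hx i).2, (hx i).1⟩⟩
      by_contra hne
      have := hsep hne
      simp only [hij, dist_self] at this
      exact (one_div_pos.2 m.cast_add_one_pos).not_ge this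
  rw [this]
  exact .iUnion fun m => (isClosed_setOf_exists_separated_tuple_in_fiber hh hK k _).measurableSet

variable [MeasurableSpace X]

theorem measurable_count_fiber_inter [OpensMeasurableSpace X] (hh : Continuous h) {K : Set X}
    (hK : IsClosed K) : Measurable fun y => Measure.count (h ⁻¹' {y} ∩ K) := by
  have hmeas : ∀ y, MeasurableSet (h ⁻¹' {y} ∩ K) := fun y =>
    ((isClosed_singleton.preimage hh).inter hK).measurableSet
  simp_rw [Measure.count_apply (hmeas _)]
  exact Measurable.of_discrete.comp (ENat.measurable_of_measurableSet_natCast_le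
    (measurableSet_setOf_natCast_le_encard_fiber hh hK))

theorem measurable_uniformOn_fiber [BorelSpace X] (hh : Continuous h) :
    Measurable fun y => uniformOn (h ⁻¹' {y}) := by
  have hcount : ∀ K, IsClosed K → Measurable fun y => uniformOn (h ⁻¹' {y}) K := by
    intro K hK
    have hfiber : Measurable fun y => Measure.count (h ⁻¹' {y}) := by
      simpa using measurable_count_fiber_inter hh isClosed_univ
    simp_rw [uniformOn, cond_apply ((isClosed_singleton.preimage hh).measurableSet)]
    exact hfiber.inv.mul (measurable_count_fiber_inter hh hK)
  exact .measure_of_isPiSystem (BorelSpace.measurable_eq.trans borel_eq_generateFrom_isClosed)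
    isPiSystem_isClosed hcount (hcount _ isClosed_univ)

end Fibers

theorem image_smul_preimage_singleton {G X Y : Type*} [Group G] [MulAction G X] [MulAction G Y]
    {h : X → Y} (hequiv : ∀ (g : G) (x : X), h (g • x) = g • h x) (g : G) (y : Y) :
    (g • ·) '' (h ⁻¹' {y}) = h ⁻¹' {g • y} := by
  ext x
  constructor
  · rintro ⟨x, rfl, rfl⟩
    exact hequiv g x
  · intro hx
    refine ⟨g⁻¹ • x, ?_, smul_inv_smul g x⟩
    simp only [mem_preimage, mem_singleton_iff, hequiv] at hx ⊢
    rw [hx, inv_smul_smul]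

theorem IsInvariantMeasure.map {G X Y : Type*} [Group G] [MulAction G X] [MulAction G Y]
    [MeasurableSpace X] [MeasurableSpace Y] [MeasurableConstSMul G X] [MeasurableConstSMul G Y]
    {μ : Measure X} (hμ : IsInvariantMeasure G μ) {h : X → Y}
    (hh : Measurable h) (hequiv : ∀ (g : G) (x : X), h (g • x) = g • h x) :
    IsInvariantMeasure G (μ.map h) := by
  intro g
  refine ⟨measurable_const_smul g, ?_⟩
  rw [Measure.map_map (measurable_const_smul g) hh,
    show (g • ·) ∘ h = h ∘ (g • ·) from funext fun x => (hequiv g x).symm,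
    ← Measure.map_map hh (measurable_const_smul g), (hμ g).map_eq]

/-- `uniformOn` of an infinite set is `0`, so infinite fibres receive no mass. -/
noncomputable def fiberUniformLift {X Y : Type*} [MeasurableSpace X] [MeasurableSpace Y]
    (h : X → Y) (ν : Measure Y) : Measure X :=
  ν.bind fun y => uniformOn (h ⁻¹' {y})

section FiberUniformLift

variable {X Y : Type*} [MetricSpace X] [CompactSpace X] [MeasurableSpace X] [BorelSpace X]
  [TopologicalSpace Y] [T2Space Y] [MeasurableSpace Y] [OpensMeasurableSpace Y]
  {h : X → Y} {ν : Measure Y}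

theorem fiberUniformLift_apply (hh : Continuous h) {B : Set X} (hB : MeasurableSet B) :
    fiberUniformLift h ν B = ∫⁻ y, uniformOn (h ⁻¹' {y}) B ∂ν :=
  Measure.bind_apply hB (measurable_uniformOn_fiber hh).aemeasurable

theorem isProbabilityMeasure_fiberUniformLift [IsProbabilityMeasure ν] (hh : Continuous h)
    (hsurj : Function.Surjective h) (hfin : ∀ᵐ y ∂ν, (h ⁻¹' {y}).Finite) :
    IsProbabilityMeasure (fiberUniformLift h ν) := by
  constructor
  rw [fiberUniformLift_apply hh .univ, lintegral_congr_ae (hfin.mono fun y hy =>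
    uniformOn_of_univ hy (hsurj y))]
  simp

theorem isInvariantMeasure_fiberUniformLift {G : Type*} [Group G] [MulAction G X]
    [MulAction G Y] [MeasurableConstSMul G X] [MeasurableConstSMul G Y]
    (hh : Continuous h) (hequiv : ∀ (g : G) (x : X), h (g • x) = g • h x)
    (hν : IsInvariantMeasure G ν) : IsInvariantMeasure G (fiberUniformLift h ν) := by
  intro g
  refine ⟨measurable_const_smul g, Measure.ext fun B hB => ?_⟩
  rw [Measure.map_apply (measurable_const_smul g) hB,
    fiberUniformLift_apply hh (measurable_const_smul g hB), fiberUniformLift_apply hh hB]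
  simp_rw [uniformOn_preimage (e := (g • ·)) (MeasurableEquiv.smul g).measurableEmbedding
    (isClosed_singleton.preimage hh).measurableSet, image_smul_preimage_singleton hequiv]
  exact (hν g).lintegral_comp ((Measure.measurable_coe hB).comp (measurable_uniformOn_fiber hh))

theorem fiberUniformLift_lt_one_of_injOn [IsProbabilityMeasure ν] (hh : Continuous h)
    (hfin : ∀ᵐ y ∂ν, (h ⁻¹' {y}).Finite) (hnt : 0 < ν {y | ¬ (h ⁻¹' {y}).Subsingleton})
    {M : Set X} (hM : MeasurableSet M) (hinj : InjOn h M) : fiberUniformLift h ν M < 1 := by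
  have hle : ∀ y, uniformOn (h ⁻¹' {y}) M ≤ 1 := fun y => prob_le_one
  have hlt : ∃ᵐ y ∂ν, uniformOn (h ⁻¹' {y}) M ≠ 1 := by
    refine ((frequently_ae_iff.2 hnt.ne').and_eventually hfin).mono fun y ⟨hy, hyfin⟩ => ?_
    refine (uniformOn_lt_one hyfin (not_subsingleton_iff.1 hy) ?_).ne
    exact fun a ha b hb => hinj ha.2 hb.2 (ha.1.trans hb.1.symm)
  calc fiberUniformLift h ν M = ∫⁻ y, uniformOn (h ⁻¹' {y}) M ∂ν := fiberUniformLift_apply hh hM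
    _ < ∫⁻ _, 1 ∂ν := lintegral_strict_mono_of_ae_le_of_frequently_ae_lt aemeasurable_const
        ((lintegral_mono hle).trans_lt (by simp)).ne (ae_of_all _ hle) hlt
    _ = 1 := by simp

end FiberUniformLift

theorem not_topoIsomorphy_of_irregular_finite_fibers_general {G : Type*} [Group G]
    [TopologicalSpace G]
    {X Y : Type*} [MetricSpace X] [CompactSpace X] [MulAction G X] [ContinuousSMul G X]
    [MeasurableSpace X] [BorelSpace X] [MetricSpace Y] [MulAction G Y]
    [ContinuousSMul G Y] [MeasurableSpace Y] [BorelSpace Y]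
    (h : X → Y)
    (μ : Measure X) [IsProbabilityMeasure μ] (hinv : IsInvariantMeasure G μ)
    (hirr : 0 < Measure.map h μ {y : Y | ¬ (h ⁻¹' {y}).Subsingleton})
    (hfin : ∀ᵐ y ∂(Measure.map h μ), (h ⁻¹' {y}).Finite) :
    ¬ IsTopoIsomorphy G h := by
  rintro ⟨⟨hh, hsurj, hequiv⟩, hiso⟩
  have := Measure.isProbabilityMeasure_map (μ := μ) hh.aemeasurable
  obtain ⟨-, -, M, _, _, hM, _, hM1, _, _, hbij, -⟩ := hiso _
    (isProbabilityMeasure_fiberUniformLift hh hsurj hfin)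
    (isInvariantMeasure_fiberUniformLift hh hequiv (hinv.map hh.measurable hequiv))
  exact (fiberUniformLift_lt_one_of_injOn hh hfin hirr hM hbij.injOn).ne hM1

/-- An irregular extension with almost surely finite fibers is not a
topo-isomorphy. -/
theorem not_topoIsomorphy_of_irregular_finite_fibers {G : Type*} [Group G]
    [TopologicalSpace G] [IsTopologicalGroup G] [LocallyCompactSpace G] [SigmaCompactSpace G]
    {X Y : Type*} [MetricSpace X] [CompactSpace X] [MulAction G X] [ContinuousSMul G X]
    [MeasurableSpace X] [BorelSpace X] [MetricSpace Y] [CompactSpace Y] [MulAction G Y]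
    [ContinuousSMul G Y] [MeasurableSpace Y] [BorelSpace Y]
    (h : X → Y) (hfac : IsFactorMap G h)
    (μ : Measure X) [IsProbabilityMeasure μ] (hinv : IsInvariantMeasure G μ)
    (hirr : 0 < Measure.map h μ {y : Y | ¬ (h ⁻¹' {y}).Subsingleton})
    (hfin : ∀ᵐ y ∂(Measure.map h μ), (h ⁻¹' {y}).Finite) :
    ¬ IsTopoIsomorphy G h :=
  not_topoIsomorphy_of_irregular_finite_fibers_general h μ hinv hirr hfin
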